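/- With h_1,...,h_K an orthogonal basis of H ⊆ T_p H^D satisfying [h_i, h_j] = -C δ_{ij}, for any x in H^D the projection distance is min_{y in H^D_H} d(x,y) = |C|^{-1/2} arccosh( sqrt( C^2 [x,p]^2 - Σ_{k=1}^K [x,h_k]^2 ) ). -/

import Mathlib

open Matrix BigOperators

/-- The Lorentz signature matrix J_D = diag(-1, 1, …, 1) over ℝ. -/
noncomputable def JmatR (D : ℕ) : Matrix (Fin (D + 1)) (Fin (D + 1)) ℝ :=
  Matrix.diagonal (fun i => if i = 0 then (-1 : ℝ) else 1)

/-- Inverse hyperbolic cosine. -/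
noncomputable def arcosh (t : ℝ) : ℝ := Real.log (t + Real.sqrt (t ^ 2 - 1))

namespace HypAux

noncomputable def B {D : ℕ} (u v : Fin (D+1) → ℝ) : ℝ := u ⬝ᵥ (JmatR D *ᵥ v)

lemma B_def {D : ℕ} (u v : Fin (D+1) → ℝ) : B u v = u ⬝ᵥ (JmatR D *ᵥ v) := rfl

lemma B_eq {D : ℕ} (u v : Fin (D+1) → ℝ) :
    B u v = ∑ i, (if i = 0 then (-1:ℝ) else 1) * u i * v i := by
  unfold B JmatR
  simp only [Matrix.mulVec_diagonal, dotProduct]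
  exact Finset.sum_congr rfl fun i _ => by ring

lemma B_symm {D : ℕ} (u v : Fin (D+1) → ℝ) : B u v = B v u := by
  rw [B_eq, B_eq]; exact Finset.sum_congr rfl fun i _ => by ring

lemma B_add_right {D : ℕ} (u v w : Fin (D+1) → ℝ) : B u (v + w) = B u v + B u w := by
  simp [B, Matrix.mulVec_add, dotProduct_add]

lemma B_smul_right {D : ℕ} (c : ℝ) (u v : Fin (D+1) → ℝ) : B u (c • v) = c * B u v := by
  simp [B, Matrix.mulVec_smul, dotProduct_smul]

noncomputable def Blin {D : ℕ} (u : Fin (D+1) → ℝ) : (Fin (D+1) → ℝ) →ₗ[ℝ] ℝ where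
  toFun v := B u v
  map_add' := B_add_right u
  map_smul' c v := by simp [B_smul_right]

lemma B_sum_right {D : ℕ} {ι : Type*} (s : Finset ι) (u : Fin (D+1) → ℝ)
    (f : ι → Fin (D+1) → ℝ) : B u (∑ k ∈ s, f k) = ∑ k ∈ s, B u (f k) :=
  map_sum (Blin u) f s

lemma B_add_left {D : ℕ} (u v w : Fin (D+1) → ℝ) : B (u + v) w = B u w + B v w := by
  rw [B_symm, B_add_right, B_symm w u, B_symm w v]

lemma B_smul_left {D : ℕ} (c : ℝ) (u v : Fin (D+1) → ℝ) : B (c • u) v = c * B u v := by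
  rw [B_symm, B_smul_right, B_symm]

lemma B_sub_right {D : ℕ} (u v w : Fin (D+1) → ℝ) : B u (v - w) = B u v - B u w := by
  have : v - w = v + (-1:ℝ) • w := by funext i; simp; ring
  rw [this, B_add_right, B_smul_right]; ring

lemma B_sub_left {D : ℕ} (u v w : Fin (D+1) → ℝ) : B (u - v) w = B u w - B v w := by
  rw [B_symm, B_sub_right, B_symm w u, B_symm w v]

lemma B_zero_left {D : ℕ} (v : Fin (D+1) → ℝ) : B 0 v = 0 := by
  have : (0 : Fin (D+1) → ℝ) = (0:ℝ) • 0 := by simp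
  rw [this, B_smul_left]; ring

noncomputable def E {D : ℕ} (u v : Fin (D+1) → ℝ) : ℝ := ∑ i : Fin D, u i.succ * v i.succ

lemma B_split {D : ℕ} (u v : Fin (D+1) → ℝ) : B u v = -(u 0 * v 0) + E u v := by
  rw [B_eq, Fin.sum_univ_succ]
  simp [E, Fin.succ_ne_zero]

lemma E_nonneg {D : ℕ} (u : Fin (D+1) → ℝ) : 0 ≤ E u u :=
  Finset.sum_nonneg fun i _ => mul_self_nonneg _

lemma E_cs {D : ℕ} (u v : Fin (D+1) → ℝ) : (E u v)^2 ≤ E u u * E v v := by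
  have := Finset.sum_mul_sq_le_sq_mul_sq Finset.univ (fun i : Fin D => u i.succ)
    (fun i : Fin D => v i.succ)
  simpa [E, sq] using this

lemma B_neg_of_timelike {D : ℕ} (u v : Fin (D+1) → ℝ) (hu : B u u < 0) (hv : B v v < 0)
    (hu0 : 0 < u 0) (hv0 : 0 < v 0) : B u v < 0 := by
  have h1 : E u u < u 0 * u 0 := by have := B_split u u; linarith
  have h2 : E v v < v 0 * v 0 := by have := B_split v v; linarith
  have h3 := E_nonneg u
  have h4 := E_nonneg v
  have hcs := E_cs u v
  rw [B_split]
  nlinarith [mul_pos hu0 hv0, mul_pos (mul_pos hu0 hv0) (mul_pos hu0 hv0)]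

lemma pos_time {D : ℕ} (u v : Fin (D+1) → ℝ) (hu : B u u < 0) (hv : B v v < 0)
    (hv0 : 0 < v 0) (huv : B u v < 0) : 0 < u 0 := by
  have hnn : B (-u) (-u) = B u u := by
    rw [B_eq, B_eq]
    exact Finset.sum_congr rfl fun i _ => by simp only [Pi.neg_apply]; ring
  have hnl : B (-u) v = -(B u v) := by
    rw [B_eq, B_eq, ← Finset.sum_neg_distrib]
    exact Finset.sum_congr rfl fun i _ => by simp only [Pi.neg_apply]; ring
  rcases lt_trichotomy (u 0) 0 with h10 | h10 | h10
  · exfalso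
    have := B_neg_of_timelike (-u) v (by rw [hnn]; exact hu) hv
      (by simp only [Pi.neg_apply]; linarith) hv0
    rw [hnl] at this
    linarith
  · exfalso
    have := B_split u u
    have := E_nonneg u
    rw [h10] at *
    nlinarith [B_split u u, E_nonneg u]
  · exact h10

lemma orth_nonneg {D : ℕ} (w p : Fin (D+1) → ℝ) (hp : B p p < 0) (hp0 : 0 < p 0)
    (hwp : B w p = 0) : 0 ≤ B w w := by
  have h1 : E p p < p 0 * p 0 := by have := B_split p p; linarith
  have h2 : w 0 * p 0 = E w p := by have := B_split w p; linarith
  have h3 := E_nonneg w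
  have h4 := E_nonneg p
  have hcs := E_cs w p
  have h2sq : (w 0 * p 0)^2 = (E w p)^2 := by rw [h2]
  have key : w 0 * w 0 * (p 0 * p 0) ≤ E w w * (p 0 * p 0) := by
    nlinarith [mul_le_mul_of_nonneg_left h1.le h3]
  have key2 : w 0 * w 0 ≤ E w w := le_of_mul_le_mul_right key (mul_pos hp0 hp0)
  rw [B_split]
  linarith

lemma B_comb_right {D K : ℕ} (x : Fin (D+1) → ℝ) (a : ℝ) (b : Fin K → ℝ)
    (p : Fin (D+1) → ℝ) (h : Fin K → Fin (D+1) → ℝ) :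
    B x (a • p + ∑ k, b k • h k) = a * B x p + ∑ k, b k * B x (h k) := by
  rw [B_add_right, B_smul_right, B_sum_right]
  simp_rw [B_smul_right]

section comb
variable {D K : ℕ} {C : ℝ} (hC : C ≠ 0) {p : Fin (D+1) → ℝ} {h : Fin K → Fin (D+1) → ℝ}
  (hpp : B p p = 1/C) (hhp : ∀ k, B (h k) p = 0)
  (horth : ∀ i j, B (h i) (h j) = if i = j then -C else 0)

include hpp hhp in
lemma comb_B_p (a : ℝ) (b : Fin K → ℝ) :
    B (a • p + ∑ k, b k • h k) p = a / C := by
  rw [B_symm, B_comb_right, hpp]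
  have : ∀ k, B p (h k) = 0 := fun k => (B_symm p (h k)).trans (hhp k)
  simp [this]
  ring

include hhp horth in
lemma comb_B_h (a : ℝ) (b : Fin K → ℝ) (k : Fin K) :
    B (a • p + ∑ j, b j • h j) (h k) = -C * b k := by
  rw [B_symm, B_comb_right, hhp k]
  simp [horth, mul_ite, Finset.sum_ite_eq]
  ring

include hpp hhp horth in
lemma comb_B_self (a : ℝ) (b : Fin K → ℝ) :
    B (a • p + ∑ k, b k • h k) (a • p + ∑ k, b k • h k)
      = a^2/C - C * ∑ k, (b k)^2 := by
  rw [B_comb_right, comb_B_p hpp hhp, Finset.mul_sum]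
  simp_rw [fun k => comb_B_h hhp horth a b k]
  rw [Finset.sum_congr rfl
      (fun k _ => by ring : ∀ k ∈ Finset.univ, b k * (-C * b k) = -(C * (b k)^2)),
    Finset.sum_neg_distrib, ← Finset.mul_sum]
  ring

include hC hpp hhp horth in
lemma span_decomp {z : Fin (D+1) → ℝ}
    (hz : z ∈ Submodule.span ℝ (insert p (Set.range h))) :
    z = (C * B z p) • p + ∑ k, (-(B z (h k))/C) • h k := by
  induction hz using Submodule.span_induction with
  | mem w hw =>
    rcases hw with rfl | ⟨k, rfl⟩
    · have h2 : ∀ k, B w (h k) = 0 := fun k => (B_symm w (h k)).trans (hhp k)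
      rw [hpp, mul_one_div_cancel hC]
      simp [h2]
    · have h1 : B (h k) p = 0 := hhp k
      have h2 : ∀ j, (-(B (h k) (h j))/C) • h j = if k = j then h j else 0 := by
        intro j
        rw [horth k j]
        by_cases hkj : k = j <;> simp [hkj, neg_neg, div_self hC]
      rw [h1, Finset.sum_congr rfl fun j _ => h2 j, Finset.sum_ite_eq]
      simp
  | zero => simp [B_zero_left]
  | add w1 w2 hw1 hw2 ih1 ih2 =>
    conv_lhs => rw [ih1, ih2]
    simp only [B_add_left, neg_add, add_div, add_smul, mul_add, Finset.sum_add_distrib]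
    abel
  | smul a w hw ih =>
    conv_lhs => rw [ih]
    simp only [B_smul_left, smul_add, smul_smul, Finset.smul_sum]
    congr 1
    · congr 1; ring
    · exact Finset.sum_congr rfl fun k _ => by congr 1; ring

end comb

lemma arcosh_mono {s t : ℝ} (hs : 1 ≤ s) (hst : s ≤ t) : arcosh s ≤ arcosh t := by
  unfold arcosh
  have h0 : (0:ℝ) < s + Real.sqrt (s^2-1) := by
    have := Real.sqrt_nonneg (s^2-1); linarith
  apply Real.log_le_log h0
  have := Real.sqrt_le_sqrt (show s^2-1 ≤ t^2-1 by nlinarith)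
  linarith

end HypAux

open HypAux in
set_option maxHeartbeats 1000000 in
/-- With h_1,…,h_K an orthogonal basis of H ⊆ T_p H^D satisfying
[h_i,h_j] = -C δ_{ij}, for any x on the hyperboloid of curvature C < 0,
min_{y ∈ H^D_H} d(x,y) = |C|^{-1/2} arccosh(√(C²[x,p]² - Σ_k [x,h_k]²)),
where H^D_H = H^D ∩ (span{p} + H). -/
theorem hyperbolic_projection_distance_parallel
    (D K : ℕ) (C : ℝ) (hC : C < 0)
    (p : Fin (D + 1) → ℝ)
    (hp : p ⬝ᵥ (JmatR D *ᵥ p) = 1 / C ∧ 0 < p 0)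
    (h : Fin K → (Fin (D + 1) → ℝ))
    (htan : ∀ k, h k ⬝ᵥ (JmatR D *ᵥ p) = 0)
    (horth : ∀ i j, h i ⬝ᵥ (JmatR D *ᵥ h j) = if i = j then -C else 0)
    (x : Fin (D + 1) → ℝ)
    (hx : x ⬝ᵥ (JmatR D *ᵥ x) = 1 / C ∧ 0 < x 0) :
    sInf {r : ℝ | ∃ y : Fin (D + 1) → ℝ,
        ((y ⬝ᵥ (JmatR D *ᵥ y) = 1 / C ∧ 0 < y 0) ∧
          y ∈ Submodule.span ℝ (insert p (Set.range h))) ∧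
        r = (Real.sqrt |C|)⁻¹ * arcosh (C * (x ⬝ᵥ (JmatR D *ᵥ y)))}
    = (Real.sqrt |C|)⁻¹ *
        arcosh (Real.sqrt (C ^ 2 * (x ⬝ᵥ (JmatR D *ᵥ p)) ^ 2 -
          ∑ k, (x ⬝ᵥ (JmatR D *ᵥ h k)) ^ 2)) := by
  classical
  obtain ⟨hpp, hp0⟩ := hp
  obtain ⟨hxx, hx0⟩ := hx
  have hC0 : C ≠ 0 := ne_of_lt hC
  simp only [← B_def] at hpp hxx htan horth ⊢
  have hinvC : (1:ℝ)/C < 0 := one_div_neg.mpr hC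
  have hBpp : B p p < 0 := by rw [hpp]; exact hinvC
  have hBxx : B x x < 0 := by rw [hxx]; exact hinvC
  have hBxp : B x p < 0 := B_neg_of_timelike x p hBxx hBpp hx0 hp0
  set u : ℝ := C * B x p with hu
  have hupos : 0 < u := mul_pos_of_neg_of_neg hC hBxp
  have hxp' : B x p = u / C := by rw [hu]; field_simp
  set V2 : ℝ := ∑ k, (B x (h k))^2 with hV2
  have hV2nn : 0 ≤ V2 := Finset.sum_nonneg fun k _ => sq_nonneg _
  set c : ℝ := (Real.sqrt |C|)⁻¹ with hc
  have hc0 : (0:ℝ) ≤ c := by positivity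
  -- key inequality : 1 ≤ u^2 - V2
  have hkey : 1 ≤ u^2 - V2 := by
    set z : Fin (D+1) → ℝ := u • p + ∑ k, (-(B x (h k))/C) • h k with hz
    have hzp : B z p = u / C := comb_B_p hpp htan u _
    have hxz : B x z = (u^2 - V2)/C := by
      rw [hz, B_comb_right, hxp']
      rw [Finset.sum_congr rfl
        (fun k _ => by ring :
          ∀ k ∈ Finset.univ, (-(B x (h k))/C) * B x (h k) = -((B x (h k))^2/C)),
        Finset.sum_neg_distrib, ← Finset.sum_div, ← hV2]
      field_simp
      ring
    have hzz : B z z = (u^2 - V2)/C := by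
      rw [hz, comb_B_self hpp htan horth]
      rw [Finset.sum_congr rfl
        (fun k _ => by ring :
          ∀ k ∈ Finset.univ, (-(B x (h k))/C)^2 = (B x (h k))^2/C^2),
        ← Finset.sum_div, ← hV2]
      field_simp
    have hwp : B (x - z) p = 0 := by rw [B_sub_left, hxp', hzp]; ring
    have hww : B (x - z) (x - z) = (1 - u^2 + V2)/C := by
      rw [B_sub_left, B_sub_right, B_sub_right, hxx, hxz, B_symm z x, hxz, hzz]
      field_simp
      ring
    have hnn := orth_nonneg (x - z) p hBpp hp0 hwp
    rw [hww] at hnn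
    rcases div_nonneg_iff.mp hnn with ⟨h1, h2⟩ | ⟨h1, h2⟩
    · linarith
    · linarith
  set m : ℝ := Real.sqrt (u^2 - V2) with hm
  have hm2 : m^2 = u^2 - V2 := Real.sq_sqrt (by linarith)
  have hm1 : (1:ℝ) ≤ m := by nlinarith [Real.sqrt_nonneg (u^2 - V2)]
  have hm0 : (0:ℝ) < m := by linarith
  have hmu : m ≤ u := by nlinarith [Real.sqrt_nonneg (u^2 - V2)]
  have harg : C ^ 2 * (B x p) ^ 2 - ∑ k, (B x (h k)) ^ 2 = u^2 - V2 := by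
    rw [hu, ← hV2]; ring
  rw [harg, ← hm]
  apply IsLeast.csInf_eq
  constructor
  · -- membership : the optimal point
    refine ⟨(u/m) • p + ∑ k, (-(B x (h k))/(m*C)) • h k, ⟨⟨?_, ?_⟩, ?_⟩, ?_⟩
    · rw [comb_B_self hpp htan horth]
      have hV2' : V2 = u^2 - m^2 := by linarith
      rw [Finset.sum_congr rfl
        (fun k _ => by ring :
          ∀ k ∈ Finset.univ, (-(B x (h k))/(m*C))^2 = (B x (h k))^2/(m^2*C^2)),
        ← Finset.sum_div, ← hV2, hV2']
      field_simp
      ring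
    · apply pos_time _ p _ hBpp hp0
      · rw [comb_B_p hpp htan]
        exact div_neg_of_pos_of_neg (div_pos hupos hm0) hC
      · rw [comb_B_self hpp htan horth]
        have hV2' : V2 = u^2 - m^2 := by linarith
        rw [Finset.sum_congr rfl
          (fun k _ => by ring :
            ∀ k ∈ Finset.univ, (-(B x (h k))/(m*C))^2 = (B x (h k))^2/(m^2*C^2)),
          ← Finset.sum_div, ← hV2, hV2']
        have : (u/m)^2/C - C * ((u ^ 2 - m ^ 2) / (m ^ 2 * C ^ 2)) = 1/C := by
          field_simp; ring
        rw [this]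
        exact hinvC
    · refine Submodule.add_mem _
        (Submodule.smul_mem _ _ (Submodule.subset_span (Set.mem_insert p _)))
        (Submodule.sum_mem _ fun k _ => Submodule.smul_mem _ _
          (Submodule.subset_span (Set.mem_insert_iff.mpr (Or.inr ⟨k, rfl⟩))))
    · have hval : C * B x ((u/m) • p + ∑ k, (-(B x (h k))/(m*C)) • h k) = m := by
        rw [B_comb_right, hxp']
        rw [Finset.sum_congr rfl
          (fun k _ => by ring :
            ∀ k ∈ Finset.univ, (-(B x (h k))/(m*C)) * B x (h k) = -((B x (h k))^2/(m*C))),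
          Finset.sum_neg_distrib, ← Finset.sum_div, ← hV2]
        have hV2' : V2 = u^2 - m^2 := by linarith
        rw [hV2']
        field_simp
        ring
      rw [hval]
  · -- lower bound
    rintro r ⟨y, ⟨⟨hyy, hy0⟩, hyspan⟩, rfl⟩
    obtain ⟨a, b, hdec⟩ : ∃ (a : ℝ) (b : Fin K → ℝ), y = a • p + ∑ k, b k • h k :=
      ⟨C * B y p, fun k => -(B y (h k))/C, span_decomp hC0 hpp htan horth hyspan⟩
    have hBy : B y y < 0 := by rw [hyy]; exact hinvC
    have hByp : B y p < 0 := B_neg_of_timelike y p hBy hBpp hy0 hp0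
    have hyp' : B y p = a / C := by rw [hdec, comb_B_p hpp htan]
    have hapos : 0 < a := by
      have hdiv : a / C < 0 := by rw [← hyp']; exact hByp
      rcases div_neg_iff.mp hdiv with ⟨h1, h2⟩ | ⟨h1, h2⟩
      · linarith
      · linarith
    have hyyE : a^2/C - C * ∑ k, (b k)^2 = 1/C := by
      rw [hdec, comb_B_self hpp htan horth] at hyy
      exact hyy
    have hcon : a^2 - ∑ k, (C * b k)^2 = 1 := by
      have e1 : ∑ k, (C * b k)^2 = C^2 * ∑ k, (b k)^2 := by
        rw [Finset.mul_sum]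
        exact Finset.sum_congr rfl fun k _ => by ring
      have e2 := hyyE
      field_simp at e2
      rw [e1]
      linear_combination e2
    have hT2 : 0 ≤ ∑ k, (C * b k)^2 := Finset.sum_nonneg fun k _ => sq_nonneg _
    have ha1 : 1 ≤ a := by nlinarith
    have hxy : C * B x y = a * u + ∑ k, (C * b k) * B x (h k) := by
      rw [hdec, B_comb_right, hxp', mul_add, Finset.mul_sum]
      congr 1
      · field_simp
      · exact Finset.sum_congr rfl fun k _ => by ring
    have hCS : (∑ k, (C * b k) * B x (h k))^2 ≤ (∑ k, (C * b k)^2) * V2 := by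
      rw [hV2]
      exact Finset.sum_mul_sq_le_sq_mul_sq Finset.univ _ _
    set S : ℝ := ∑ k, (C * b k) * B x (h k) with hS
    set T2 : ℝ := ∑ k, (C * b k)^2 with hT2d
    have hau : m ≤ a * u := by nlinarith [mul_le_mul_of_nonneg_right ha1 hupos.le]
    have hid : (a*u - m)^2 - T2 * V2 = (a*m - u)^2 := by
      have e1 : T2 = a^2 - 1 := by linarith
      have e2 : V2 = u^2 - m^2 := by linarith
      rw [e1, e2]; ring
    have habs : S^2 ≤ (a*u - m)^2 := by nlinarith [sq_nonneg (a*m - u)]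
    have hSlb : -(a*u - m) ≤ S := by nlinarith [sq_nonneg (S + (a*u - m))]
    have hfin : m ≤ C * B x y := by rw [hxy]; linarith
    exact mul_le_mul_of_nonneg_left (arcosh_mono hm1 hfin) hc0
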